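/- arXiv:2208.10537 — 5 statements merged into one kernel-verified Lean document; each statement's English description precedes it below -/
import Mathlib

section
/- Let G = (Γ, S, H) be an irreducible Cayley coset digraph, let r ∈ S, and let D be a 1-factor of G, i.e., a permutation D of the set of left cosets Γ/H such that every pair (x, D(x)) is an edge of G. Then there exists a system of coset representatives R : Γ/H → Γ (with R(x)H = x for every coset x) such that D(gH) = R(gH)·r·H for every coset gH. -/
namespace QuotientGroup

variable {Γ : Type*} [Group Γ] {H : Subgroup Γ}

theorem mk_mul_left_congr (g : Γ) {a b : Γ} (hab : (a : Γ ⧸ H) = b) :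
    ((g * a : Γ) : Γ ⧸ H) = ((g * b : Γ) : Γ ⧸ H) :=
  congrArg (g • ·) hab

/-- Irreducibility moves the edge label: if `sH = hrH`, the edge `(gH, gsH)` is the `r`-edge
`(aH, arH)` leaving the representative `a = gh` of `gH`. -/
theorem exists_mk_eq_and_mk_mul_eq_of_mk_eq_mk_mul {r s : Γ} (g : Γ) {h : Γ} (hh : h ∈ H)
    (hsr : (s : Γ ⧸ H) = ((h * r : Γ) : Γ ⧸ H)) :
    ∃ a : Γ, (a : Γ ⧸ H) = g ∧ ((g * s : Γ) : Γ ⧸ H) = ((a * r : Γ) : Γ ⧸ H) :=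
  ⟨g * h, mk_mul_of_mem g hh, by rw [mul_assoc, mk_mul_left_congr g hsr]⟩

end QuotientGroup

theorem cayley_coset_one_factor_coset_reps_general
    {Γ : Type*} [Group Γ] (H : Subgroup Γ) (S : Finset Γ)
    (hirr : ∀ s ∈ S, ∀ t ∈ S, ∃ h ∈ H, (s : Γ ⧸ H) = ((h * t : Γ) : Γ ⧸ H))
    (r : Γ) (hr : r ∈ S)
    (D : Equiv.Perm (Γ ⧸ H))
    (hD : ∀ x : Γ ⧸ H, ∃ g : Γ, ∃ s ∈ S,
        x = (g : Γ ⧸ H) ∧ D x = ((g * s : Γ) : Γ ⧸ H)) :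
    ∃ R : Γ ⧸ H → Γ,
      (∀ x : Γ ⧸ H, ((R x : Γ) : Γ ⧸ H) = x) ∧
      (∀ g : Γ, D (g : Γ ⧸ H) = ((R (g : Γ ⧸ H) * r : Γ) : Γ ⧸ H)) := by
  have hrep : ∀ x : Γ ⧸ H, ∃ a : Γ, (a : Γ ⧸ H) = x ∧ D x = ((a * r : Γ) : Γ ⧸ H) := by
    intro x
    obtain ⟨g, s, hs, rfl, hDx⟩ := hD x
    obtain ⟨h, hh, hsr⟩ := hirr s hs r hr
    rw [hDx]
    exact QuotientGroup.exists_mk_eq_and_mk_mul_eq_of_mk_eq_mk_mul g hh hsr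
  choose R hR hDR using hrep
  exact ⟨R, hR, fun g => hDR g⟩

/-- Theorem 1 (first part): in an irreducible Cayley coset digraph `(Γ, S, H)`,
given `r ∈ S` and a 1-factor `D`, there is a system of coset representatives `R`
such that `D(gH) = R(gH)·r·H` for every coset `gH`. -/
theorem cayley_coset_one_factor_coset_reps
    {Γ : Type*} [Group Γ] [Fintype Γ] (H : Subgroup Γ) (S : Finset Γ)
    (hSH : ∀ s ∈ S, s ∉ H)
    (hgen : Subgroup.closure ((S : Set Γ) ∪ (H : Set Γ)) = ⊤)
    (hHS : ∀ h ∈ H, ∀ s ∈ S, ∃ t ∈ S, ∃ h' ∈ H, h * s = t * h')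
    (hdist : ∀ s ∈ S, ∀ t ∈ S, (s : Γ ⧸ H) = (t : Γ ⧸ H) → s = t)
    (hirr : ∀ s ∈ S, ∀ t ∈ S, ∃ h ∈ H, (s : Γ ⧸ H) = ((h * t : Γ) : Γ ⧸ H))
    (r : Γ) (hr : r ∈ S)
    (D : Equiv.Perm (Γ ⧸ H))
    (hD : ∀ x : Γ ⧸ H, ∃ g : Γ, ∃ s ∈ S,
        x = (g : Γ ⧸ H) ∧ D x = ((g * s : Γ) : Γ ⧸ H)) :
    ∃ R : Γ ⧸ H → Γ,
      (∀ x : Γ ⧸ H, ((R x : Γ) : Γ ⧸ H) = x) ∧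
      (∀ g : Γ, D (g : Γ ⧸ H) = ((R (g : Γ ⧸ H) * r : Γ) : Γ ⧸ H)) :=
  cayley_coset_one_factor_coset_reps_general H S hirr r hr D hD
end

section
/- Let Γ be a finite group, H a subgroup and S a subset of Γ with S ∩ H = ∅, Γ generated by S ∪ H, HS ⊆ SH, and the cosets sH for s ∈ S pairwise distinct. Define a relation on S by s ∼ t if and only if there exists h ∈ H with hsH = tH. Then ∼ is an equivalence relation on S, and every equivalence class T ⊆ S satisfies HTH = TH (as subsets of Γ); consequently each (Γ, T, H) is an irreducible Cayley coset digraph. -/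
/-!
The relation `s ∼ t` says exactly that `t` lies in the double coset `HsH`, so it is the
double coset equivalence restricted to `S`, and each class is `T = S ∩ HsH`. Since `HS ⊆ SH`,
an element `htk` with `t ∈ T` and `h, k ∈ H` can be rewritten as `t'h'k` with `t' ∈ S`, and
`t' = h t h'⁻¹` still lies in `HsH`; hence `HTH ⊆ TH`.
-/

open Pointwise

section

variable {G : Type*} [Group G]

namespace DoubleCoset

theorem mem_doubleCoset_symm {K H : Subgroup G} {s t : G} (hst : t ∈ doubleCoset s K H) :
    s ∈ doubleCoset t K H :=
  doubleCoset_eq_of_mem hst ▸ mem_doubleCoset_self K H s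

theorem mem_doubleCoset_trans {K H : Subgroup G} {s t r : G} (hst : t ∈ doubleCoset s K H)
    (htr : r ∈ doubleCoset t K H) : r ∈ doubleCoset s K H :=
  doubleCoset_eq_of_mem hst ▸ htr

theorem exists_mul_mk_eq_iff_mem_doubleCoset (K H : Subgroup G) (s t : G) :
    (∃ k ∈ K, ((k * s : G) : G ⧸ H) = t) ↔ t ∈ doubleCoset s K H := by
  simp only [mem_doubleCoset, QuotientGroup.eq]
  constructor
  · rintro ⟨k, hk, hkst⟩
    exact ⟨k, hk, (k * s)⁻¹ * t, hkst, by group⟩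
  · rintro ⟨k, hk, h, hh, rfl⟩
    exact ⟨k, hk, by simpa [mul_assoc] using hh⟩

theorem sep_exists_mul_mk_eq (K H : Subgroup G) (S : Set G) (s : G) :
    {t ∈ S | ∃ k ∈ K, ((k * s : G) : G ⧸ H) = t} = S ∩ doubleCoset s K H := by
  ext t
  simp only [Set.mem_ofPred_eq, Set.mem_inter_iff, exists_mul_mk_eq_iff_mem_doubleCoset]

theorem subgroup_mul_doubleCoset_mul_subgroup_subset (K H : Subgroup G) (s : G) :
    (K : Set G) * doubleCoset s K H * H ⊆ doubleCoset s K H := by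
  rintro _ ⟨_, ⟨k, hk, d, hd, rfl⟩, h, hh, rfl⟩
  rw [← doubleCoset_eq_of_mem hd]
  exact mem_doubleCoset.2 ⟨k, hk, h, hh, rfl⟩

end DoubleCoset

theorem subgroup_mul_inter_mul_subgroup_eq {H : Subgroup G} {S D : Set G}
    (hHS : (H : Set G) * S ⊆ S * H) (hD : (H : Set G) * D * H ⊆ D) :
    (H : Set G) * (S ∩ D) * H = (S ∩ D) * H := by
  refine subset_antisymm ?_ (Set.mul_subset_mul_right (Set.subset_mul_right _ H.one_mem))
  rintro _ ⟨_, ⟨h, hh, t, ⟨htS, htD⟩, rfl⟩, k, hk, rfl⟩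
  obtain ⟨t', ht'S, h', hh', hht : t' * h' = h * t⟩ := hHS (Set.mul_mem_mul hh htS)
  have ht' : t' = h * t * h'⁻¹ := by rw [← hht]; group
  have ht'D : t' ∈ D := hD (ht' ▸ Set.mul_mem_mul (Set.mul_mem_mul hh htD) (H.inv_mem hh'))
  exact ⟨t', ⟨ht'S, ht'D⟩, h' * k, H.mul_mem hh' hk, by simp only [← mul_assoc, hht]⟩

end

theorem cayley_coset_decomposition_into_irreducible_general
    {Γ : Type*} [Group Γ] (H : Subgroup Γ) (S : Set Γ)
    (hHS : ∀ h ∈ H, ∀ s ∈ S, ∃ t ∈ S, ∃ h' ∈ H, h * s = t * h') :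
    (∀ s ∈ S, ∃ h ∈ H, ((h * s : Γ) : Γ ⧸ H) = (s : Γ ⧸ H)) ∧
    (∀ s ∈ S, ∀ t ∈ S,
      (∃ h ∈ H, ((h * s : Γ) : Γ ⧸ H) = (t : Γ ⧸ H)) →
      ∃ h ∈ H, ((h * t : Γ) : Γ ⧸ H) = (s : Γ ⧸ H)) ∧
    (∀ s ∈ S, ∀ t ∈ S, ∀ r ∈ S,
      (∃ h ∈ H, ((h * s : Γ) : Γ ⧸ H) = (t : Γ ⧸ H)) →
      (∃ h ∈ H, ((h * t : Γ) : Γ ⧸ H) = (r : Γ ⧸ H)) →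
      ∃ h ∈ H, ((h * s : Γ) : Γ ⧸ H) = (r : Γ ⧸ H)) ∧
    (∀ s ∈ S,
      (H : Set Γ) * {t ∈ S | ∃ h ∈ H, ((h * s : Γ) : Γ ⧸ H) = (t : Γ ⧸ H)} * (H : Set Γ)
        = {t ∈ S | ∃ h ∈ H, ((h * s : Γ) : Γ ⧸ H) = (t : Γ ⧸ H)} * (H : Set Γ)) ∧
    (∀ s ∈ S,
      ∀ t ∈ {t ∈ S | ∃ h ∈ H, ((h * s : Γ) : Γ ⧸ H) = (t : Γ ⧸ H)},
      ∀ r ∈ {t ∈ S | ∃ h ∈ H, ((h * s : Γ) : Γ ⧸ H) = (t : Γ ⧸ H)},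
        ∃ h ∈ H, (t : Γ ⧸ H) = ((h * r : Γ) : Γ ⧸ H)) := by
  have hrel := DoubleCoset.exists_mul_mk_eq_iff_mem_doubleCoset H H
  have hHS' : (H : Set Γ) * S ⊆ S * H := by
    rintro _ ⟨h, hh, s, hs, rfl⟩
    obtain ⟨t, ht, h', hh', hhs⟩ := hHS h hh s hs
    exact ⟨t, ht, h', hh', hhs.symm⟩
  refine ⟨fun s _ => (hrel s s).2 (DoubleCoset.mem_doubleCoset_self H H s),
    fun s _ t _ hst => (hrel t s).2 (DoubleCoset.mem_doubleCoset_symm ((hrel s t).1 hst)),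
    fun s _ t _ r _ hst htr =>
      (hrel s r).2 (DoubleCoset.mem_doubleCoset_trans ((hrel s t).1 hst) ((hrel t r).1 htr)),
    fun s _ => ?_, fun s _ t ht r hr => ?_⟩
  · rw [DoubleCoset.sep_exists_mul_mk_eq]
    exact subgroup_mul_inter_mul_subgroup_eq hHS'
      (DoubleCoset.subgroup_mul_doubleCoset_mul_subgroup_subset H H s)
  · rw [DoubleCoset.sep_exists_mul_mk_eq] at ht hr
    obtain ⟨h, hh, hrt⟩ := (hrel r t).2
      (DoubleCoset.mem_doubleCoset_trans (DoubleCoset.mem_doubleCoset_symm hr.2) ht.2)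
    exact ⟨h, hh, hrt.symm⟩

/-- Theorem 3: the relation `s ∼ t ↔ ∃ h ∈ H, hsH = tH` is an equivalence
relation on `S`, and each equivalence class `T` satisfies `HTH = TH`;
consequently each `(Γ, T, H)` is irreducible. -/
theorem cayley_coset_decomposition_into_irreducible
    {Γ : Type*} [Group Γ] [Fintype Γ] (H : Subgroup Γ) (S : Set Γ)
    (hSH : ∀ s ∈ S, s ∉ H)
    (hgen : Subgroup.closure (S ∪ (H : Set Γ)) = ⊤)
    (hHS : ∀ h ∈ H, ∀ s ∈ S, ∃ t ∈ S, ∃ h' ∈ H, h * s = t * h')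
    (hdist : ∀ s ∈ S, ∀ t ∈ S, (s : Γ ⧸ H) = (t : Γ ⧸ H) → s = t) :
    (∀ s ∈ S, ∃ h ∈ H, ((h * s : Γ) : Γ ⧸ H) = (s : Γ ⧸ H)) ∧
    (∀ s ∈ S, ∀ t ∈ S,
      (∃ h ∈ H, ((h * s : Γ) : Γ ⧸ H) = (t : Γ ⧸ H)) →
      ∃ h ∈ H, ((h * t : Γ) : Γ ⧸ H) = (s : Γ ⧸ H)) ∧
    (∀ s ∈ S, ∀ t ∈ S, ∀ r ∈ S,
      (∃ h ∈ H, ((h * s : Γ) : Γ ⧸ H) = (t : Γ ⧸ H)) →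
      (∃ h ∈ H, ((h * t : Γ) : Γ ⧸ H) = (r : Γ ⧸ H)) →
      ∃ h ∈ H, ((h * s : Γ) : Γ ⧸ H) = (r : Γ ⧸ H)) ∧
    (∀ s ∈ S,
      (H : Set Γ) * {t ∈ S | ∃ h ∈ H, ((h * s : Γ) : Γ ⧸ H) = (t : Γ ⧸ H)} * (H : Set Γ)
        = {t ∈ S | ∃ h ∈ H, ((h * s : Γ) : Γ ⧸ H) = (t : Γ ⧸ H)} * (H : Set Γ)) ∧
    (∀ s ∈ S,
      ∀ t ∈ {t ∈ S | ∃ h ∈ H, ((h * s : Γ) : Γ ⧸ H) = (t : Γ ⧸ H)},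
      ∀ r ∈ {t ∈ S | ∃ h ∈ H, ((h * s : Γ) : Γ ⧸ H) = (t : Γ ⧸ H)},
        ∃ h ∈ H, (t : Γ ⧸ H) = ((h * r : Γ) : Γ ⧸ H)) :=
  cayley_coset_decomposition_into_irreducible_general H S hHS
end

section
/- Every Cayley coset digraph G = (Γ, S, H) has a 1-factorization labeled by the elements of S: there exists a family of permutations (σ_s)_{s ∈ S} of the coset space Γ/H such that for every coset gH the multiset {σ_s(gH) : s ∈ S} equals the multiset {gsH : s ∈ S}; in particular each (x, σ_s(x)) is an edge of G and the graphs of the σ_s partition the edge set of G. -/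
/-!
Since every `h ∈ H` permutes the cosets `sH` (`s ∈ S`), the out-neighbourhood of `gH` is the
well-defined finset `g • {sH : s ∈ S}` of size `|S|`. This map is `Γ`-equivariant and `Γ` acts
transitively on `Γ ⧸ H`, so all in-degrees are equal too, and double counting makes them `|S|`.
By Hall's theorem a digraph in which every vertex has in- and out-degree `k > 0` contains the
graph of a permutation; removing it leaves a `(k - 1)`-regular digraph, and induction on `k`
splits the whole edge multiset into `k` permutations.
-/

open Finset
open scoped Pointwise

section RegularDigraph

variable {V : Type*} [Fintype V] [DecidableEq V]

/-- A digraph on `V` is encoded by its out-neighbourhood map `N : V → Finset V`. -/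
def inNeighbors (N : V → Finset V) (y : V) : Finset V := {x | y ∈ N x}

@[simp]
lemma mem_inNeighbors {N : V → Finset V} {x y : V} : x ∈ inNeighbors N y ↔ y ∈ N x := by
  simp [inNeighbors]

lemma sum_card_inNeighbors (N : V → Finset V) :
    ∑ y, #(inNeighbors N y) = ∑ x, #(N x) := by
  simpa [bipartiteAbove, bipartiteBelow, filter_mem_eq_inter, inNeighbors] using
    (sum_card_bipartiteAbove_eq_sum_card_bipartiteBelow (fun x y => y ∈ N x)
      (s := univ) (t := univ)).symm

lemma card_le_card_biUnion_of_degree {N : V → Finset V} {k : ℕ} (hk : 0 < k)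
    (hout : ∀ x, k ≤ #(N x)) (hin : ∀ y, #(inNeighbors N y) ≤ k) (A : Finset V) :
    #A ≤ #(A.biUnion N) := by
  refine Nat.le_of_mul_le_mul_right
    (card_mul_le_card_mul (fun x y => y ∈ N x) (fun x hx => ?_) (fun y _ => ?_)) hk
  · rw [bipartiteAbove, filter_mem_eq_inter, inter_eq_right.2 (subset_biUnion_of_mem N hx)]
    exact hout x
  · exact (card_le_card (filter_subset_filter _ (subset_univ A))).trans (hin y)

lemma exists_perm_forall_mem_of_regular {N : V → Finset V} {k : ℕ} (hk : 0 < k)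
    (hout : ∀ x, #(N x) = k) (hin : ∀ y, #(inNeighbors N y) = k) :
    ∃ σ : Equiv.Perm V, ∀ x, σ x ∈ N x := by
  obtain ⟨f, hf, hfN⟩ := (all_card_le_biUnion_card_iff_exists_injective N).1
    (card_le_card_biUnion_of_degree hk (fun x => (hout x).ge) (fun y => (hin y).le))
  exact ⟨Equiv.ofBijective f (Finite.injective_iff_bijective.1 hf), hfN⟩

lemma inNeighbors_erase_perm (N : V → Finset V) (σ : Equiv.Perm V) (y : V) :
    inNeighbors (fun x => (N x).erase (σ x)) y = (inNeighbors N y).erase (σ.symm y) := by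
  ext x
  simp [Equiv.eq_symm_apply, eq_comm]

lemma exists_fin_perms_of_regular (k : ℕ) :
    ∀ N : V → Finset V, (∀ x, #(N x) = k) → (∀ y, #(inNeighbors N y) = k) →
      ∃ σ : Fin k → Equiv.Perm V, ∀ x, univ.val.map (σ · x) = (N x).val := by
  induction k with
  | zero =>
    intro N hout _
    exact ⟨finZeroElim, fun x => by simp [card_eq_zero.1 (hout x)]⟩
  | succ k ih =>
    intro N hout hin
    obtain ⟨τ, hτ⟩ := exists_perm_forall_mem_of_regular k.succ_pos hout hin
    obtain ⟨σ, hσ⟩ := ih (fun x => (N x).erase (τ x))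
      (fun x => by rw [card_erase_of_mem (hτ x), hout]; rfl)
      (fun y => by
        rw [inNeighbors_erase_perm, card_erase_of_mem (by simpa using hτ (τ.symm y)), hin]; rfl)
    refine ⟨Fin.cons τ σ, fun x => ?_⟩
    have hσx := hσ x
    rw [Fin.univ_val_map] at hσx ⊢
    rw [List.ofFn_succ, Fin.cons_zero]
    simp only [Fin.cons_succ]
    rw [← Multiset.cons_coe, hσx, erase_val, Multiset.cons_erase (hτ x)]

theorem exists_perms_of_regular {ι : Type*} [Fintype ι] (N : V → Finset V)
    (hout : ∀ x, #(N x) = Fintype.card ι) (hin : ∀ y, #(inNeighbors N y) = Fintype.card ι) :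
    ∃ σ : ι → Equiv.Perm V, ∀ x, univ.val.map (σ · x) = (N x).val := by
  obtain ⟨σ, hσ⟩ := exists_fin_perms_of_regular _ N hout hin
  refine ⟨fun i => σ (Fintype.equivFin ι i), fun x => ?_⟩
  rw [← hσ x, ← Multiset.map_univ_val_equiv (Fintype.equivFin ι), Multiset.map_map]
  rfl

end RegularDigraph

section EquivariantDigraph

variable {G V : Type*} [Group G] [MulAction G V] [Fintype V] [DecidableEq V]

lemma inNeighbors_smul {N : V → Finset V} (hN : ∀ (a : G) x, N (a • x) = a • N x)
    (a : G) (y : V) : inNeighbors N (a • y) = a • inNeighbors N y := by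
  ext x
  obtain ⟨x, rfl⟩ : ∃ z, a • z = x := ⟨a⁻¹ • x, smul_inv_smul a x⟩
  rw [smul_mem_smul_finset_iff, mem_inNeighbors, mem_inNeighbors, hN, smul_mem_smul_finset_iff]

lemma card_inNeighbors_of_pretransitive [MulAction.IsPretransitive G V] {N : V → Finset V}
    {k : ℕ} (hN : ∀ (a : G) x, N (a • x) = a • N x) (hout : ∀ x, #(N x) = k) (y : V) :
    #(inNeighbors N y) = k := by
  have hconst : ∀ z, #(inNeighbors N z) = #(inNeighbors N y) := by
    intro z
    obtain ⟨a, rfl⟩ := MulAction.exists_smul_eq G y z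
    rw [inNeighbors_smul hN, card_smul_finset]
  have hsum := sum_card_inNeighbors N
  simp only [hconst, hout, sum_const, card_univ, smul_eq_mul] at hsum
  have : Nonempty V := ⟨y⟩
  exact Nat.eq_of_mul_eq_mul_left Fintype.card_pos hsum

end EquivariantDigraph

section CayleyCoset

variable {Γ : Type*} [Group Γ] (H : Subgroup Γ) (S : Finset Γ) [DecidableEq (Γ ⧸ H)]

lemma smul_image_mk_subset (hHS : ∀ h ∈ H, ∀ s ∈ S, ∃ t ∈ S, ∃ h' ∈ H, h * s = t * h')
    {h : Γ} (hh : h ∈ H) : h • S.image ((↑) : Γ → Γ ⧸ H) ⊆ S.image ((↑) : Γ → Γ ⧸ H) := by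
  intro _ hx
  obtain ⟨_, hy, rfl⟩ := mem_smul_finset.1 hx
  obtain ⟨s, hs, rfl⟩ := mem_image.1 hy
  obtain ⟨t, ht, h', hh', hst⟩ := hHS h hh s hs
  exact mem_image.2 ⟨t, ht, by rw [MulAction.Quotient.smul_mk, smul_eq_mul, hst,
    QuotientGroup.mk_mul_of_mem t hh']⟩

lemma smul_image_mk_congr (hHS : ∀ h ∈ H, ∀ s ∈ S, ∃ t ∈ S, ∃ h' ∈ H, h * s = t * h')
    {g g' : Γ} (hg : (g : Γ ⧸ H) = g') :
    g • S.image ((↑) : Γ → Γ ⧸ H) = g' • S.image ((↑) : Γ → Γ ⧸ H) := by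
  have hmem : g⁻¹ * g' ∈ H := QuotientGroup.eq.1 hg
  have hfix : (g⁻¹ * g') • S.image ((↑) : Γ → Γ ⧸ H) = S.image (↑) :=
    eq_of_subset_of_card_le (smul_image_mk_subset H S hHS hmem) (card_smul_finset _ _).ge
  conv_lhs => rw [← hfix, smul_smul, mul_inv_cancel_left]

/-- The out-neighbourhood `{x s H : s ∈ S}` of a coset `x = gH`, computed from a representative. -/
noncomputable def cosetNeighbors (x : Γ ⧸ H) : Finset (Γ ⧸ H) :=
  x.out • S.image ((↑) : Γ → Γ ⧸ H)

variable {H S}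

lemma cosetNeighbors_mk (hHS : ∀ h ∈ H, ∀ s ∈ S, ∃ t ∈ S, ∃ h' ∈ H, h * s = t * h') (g : Γ) :
    cosetNeighbors H S g = g • S.image ((↑) : Γ → Γ ⧸ H) :=
  smul_image_mk_congr H S hHS (QuotientGroup.out_eq' (g : Γ ⧸ H))

lemma cosetNeighbors_smul (hHS : ∀ h ∈ H, ∀ s ∈ S, ∃ t ∈ S, ∃ h' ∈ H, h * s = t * h')
    (a : Γ) (x : Γ ⧸ H) : cosetNeighbors H S (a • x) = a • cosetNeighbors H S x := by
  induction x using QuotientGroup.induction_on with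
  | H g => rw [MulAction.Quotient.smul_mk, cosetNeighbors_mk hHS, cosetNeighbors_mk hHS,
    smul_eq_mul, mul_smul]

lemma cosetNeighbors_mk_val (hHS : ∀ h ∈ H, ∀ s ∈ S, ∃ t ∈ S, ∃ h' ∈ H, h * s = t * h')
    (hinj : Set.InjOn ((↑) : Γ → Γ ⧸ H) S) (g : Γ) :
    (cosetNeighbors H S g).val = S.val.map fun s => ((g * s : Γ) : Γ ⧸ H) := by
  rw [cosetNeighbors_mk hHS, smul_finset_def, image_image,
    image_val_of_injOn ((MulAction.injective g).comp_injOn hinj)]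
  rfl

lemma card_cosetNeighbors (hinj : Set.InjOn ((↑) : Γ → Γ ⧸ H) S) (x : Γ ⧸ H) : #(cosetNeighbors H S x) = #S := by
  rw [cosetNeighbors, card_smul_finset, card_image_of_injOn hinj]

end CayleyCoset

theorem cayley_coset_one_factorization_general
    {Γ : Type*} [Group Γ] [Fintype Γ] (H : Subgroup Γ) (S : Finset Γ)
    (hHS : ∀ h ∈ H, ∀ s ∈ S, ∃ t ∈ S, ∃ h' ∈ H, h * s = t * h')
    (hdist : ∀ s ∈ S, ∀ t ∈ S, (s : Γ ⧸ H) = (t : Γ ⧸ H) → s = t) :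
    ∃ σ : {s : Γ // s ∈ S} → Equiv.Perm (Γ ⧸ H),
      ∀ g : Γ,
        (S.attach.val.map fun s => σ s ((g : Γ ⧸ H))) =
        (S.val.map fun s => ((g * s : Γ) : Γ ⧸ H)) := by
  classical
  have hinj : Set.InjOn ((↑) : Γ → Γ ⧸ H) S := fun s hs t ht => hdist s hs t ht
  have hout (x : Γ ⧸ H) : #(cosetNeighbors H S x) = Fintype.card S := by
    rw [card_cosetNeighbors hinj, Fintype.card_coe]
  obtain ⟨σ, hσ⟩ := exists_perms_of_regular (cosetNeighbors H S) hout
    (card_inNeighbors_of_pretransitive (cosetNeighbors_smul hHS) hout)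
  refine ⟨σ, fun g => ?_⟩
  rw [← univ_eq_attach, hσ, cosetNeighbors_mk_val hHS hinj]

/-- Corollary 4: every Cayley coset digraph `(Γ, S, H)` has a 1-factorization
labeled by the elements of `S`: permutations `σ_s` of `Γ ⧸ H` such that for each
coset `gH` the multiset `{σ_s(gH) : s ∈ S}` equals the multiset `{gsH : s ∈ S}`. -/
theorem cayley_coset_one_factorization
    {Γ : Type*} [Group Γ] [Fintype Γ] (H : Subgroup Γ) (S : Finset Γ)
    (hSH : ∀ s ∈ S, s ∉ H)
    (hgen : Subgroup.closure ((S : Set Γ) ∪ (H : Set Γ)) = ⊤)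
    (hHS : ∀ h ∈ H, ∀ s ∈ S, ∃ t ∈ S, ∃ h' ∈ H, h * s = t * h')
    (hdist : ∀ s ∈ S, ∀ t ∈ S, (s : Γ ⧸ H) = (t : Γ ⧸ H) → s = t) :
    ∃ σ : {s : Γ // s ∈ S} → Equiv.Perm (Γ ⧸ H),
      ∀ g : Γ,
        (S.attach.val.map fun s => σ s ((g : Γ ⧸ H))) =
        (S.val.map fun s => ((g * s : Γ) : Γ ⧸ H)) :=
  cayley_coset_one_factorization_general H S hHS hdist
end

section
/- Let n = a·b, U = aℤ/nℤ, π a permutation of {0,…,a−1}, v₀,…,v_{a−1} ∈ U, and Y : ℤ/nℤ → ℤ/nℤ the bijection Y(i + u) = π(i) + u + vᵢ. Fix i ∈ {0,…,a−1} and u ∈ U. Let c be the least positive integer with π^c(i) = i, let v = vᵢ + v_{π(i)} + v_{π²(i)} + ⋯ + v_{π^{c−1}(i)}, and let α be the least positive integer with α·v = 0 in ℤ/nℤ. Then the least positive integer k with Y^k(i + u) = i + u is k = α·c; that is, the cycle of the permutation Y containing i + u has length α·c. -/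
/-!
Writing `i + u` as the pair `(i, u)`, the map `Y` becomes the skew product
`(i, u) ↦ (π i, u + v i)` over `π`, so `Y^m (i + u) = π^m i + u + S_m`, where `S_m` is the
Birkhoff sum `v i + v (π i) + ⋯ + v (π^(m-1) i)`. Returning to `i + u` forces `c ∣ m`, and for
`m = q c` the sum `S_m` is `q • S_c`, which vanishes exactly when `α ∣ q`.
-/

open Function Set

namespace Function

variable {α β G : Type*}

theorem minimalPeriod_eq_of_isPeriodicPt_of_forall_lt {f : α → α} {x : α} {c : ℕ} (hc : 0 < c)
    (hper : IsPeriodicPt f c x) (hmin : ∀ m, 0 < m → m < c → ¬IsPeriodicPt f m x) :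
    minimalPeriod f x = c := by
  refine (hper.minimalPeriod_le hc).antisymm (not_lt.1 fun hlt => ?_)
  exact hmin _ (hper.minimalPeriod_pos hc) hlt (isPeriodicPt_minimalPeriod f x)

theorem minimalPeriod_eq_of_semiconj_on {φ : α → β} {f : α → α} {g : β → β} {s : Set α}
    (hs : MapsTo f s s) (hφ : InjOn φ s) (h : ∀ x ∈ s, φ (f x) = g (φ x)) {x : α} (hx : x ∈ s) :
    minimalPeriod g (φ x) = minimalPeriod f x := by
  have iterate_eq : ∀ m, g^[m] (φ x) = φ (f^[m] x) := by
    intro m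
    induction m with
    | zero => rfl
    | succ m ih => rw [iterate_succ_apply', ih, iterate_succ_apply', h _ (hs.iterate m hx)]
  refine minimalPeriod_eq_minimalPeriod_iff.2 fun m => ?_
  rw [IsPeriodicPt, IsFixedPt, iterate_eq]
  exact hφ.eq_iff (hs.iterate m hx) hx

end Function

section SkewProduct

variable {α G : Type*} [AddCommGroup G]

theorem birkhoffSum_mul_of_isPeriodicPt {f : α → α} {x : α} {c : ℕ} (hx : IsPeriodicPt f c x)
    (σ : α → G) (q : ℕ) : birkhoffSum f σ (q * c) x = q • birkhoffSum f σ c x := by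
  induction q with
  | zero => simp [birkhoffSum_zero]
  | succ q ih => rw [Nat.succ_mul, birkhoffSum_add, ih, (hx.const_mul q).eq, succ_nsmul]

def skewProduct (f : α → α) (σ : α → G) (p : α × G) : α × G := (f p.1, p.2 + σ p.1)

theorem skewProduct_iterate (f : α → α) (σ : α → G) (m : ℕ) (p : α × G) :
    (skewProduct f σ)^[m] p = (f^[m] p.1, p.2 + birkhoffSum f σ m p.1) := by
  induction m with
  | zero => simp [birkhoffSum_zero]
  | succ m ih =>
    rw [iterate_succ_apply', ih]
    simp only [skewProduct, iterate_succ_apply', birkhoffSum_succ, add_assoc]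

theorem isPeriodicPt_skewProduct_iff {f : α → α} {σ : α → G} {m : ℕ} {p : α × G} :
    IsPeriodicPt (skewProduct f σ) m p ↔ IsPeriodicPt f m p.1 ∧ birkhoffSum f σ m p.1 = 0 := by
  simp only [IsPeriodicPt, IsFixedPt, skewProduct_iterate, Prod.ext_iff, add_eq_left]

theorem minimalPeriod_skewProduct (f : α → α) (σ : α → G) (p : α × G) :
    minimalPeriod (skewProduct f σ) p =
      minimalPeriod f p.1 * addOrderOf (birkhoffSum f σ (minimalPeriod f p.1) p.1) := by
  set c := minimalPeriod f p.1
  refine Nat.dvd_right_iff_eq.1 fun m => ?_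
  rw [← isPeriodicPt_iff_minimalPeriod_dvd, isPeriodicPt_skewProduct_iff,
    isPeriodicPt_iff_minimalPeriod_dvd]
  constructor
  · rintro ⟨⟨q, rfl⟩, hsum⟩
    rw [mul_comm c q, birkhoffSum_mul_of_isPeriodicPt (isPeriodicPt_minimalPeriod f p.1)] at hsum
    exact mul_dvd_mul_left c (addOrderOf_dvd_of_nsmul_eq_zero hsum)
  · rintro ⟨q, rfl⟩
    refine ⟨dvd_mul_of_dvd_left (dvd_mul_right c _) q, ?_⟩
    rw [mul_assoc, mul_comm, birkhoffSum_mul_of_isPeriodicPt (isPeriodicPt_minimalPeriod f p.1),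
      mul_nsmul, addOrderOf_nsmul_eq_zero, nsmul_zero]

end SkewProduct

theorem ZMod.injOn_natCast_fin_add {n a : ℕ} (hdvd : a ∣ n) :
    InjOn (fun p : Fin a × ZMod n => ((p.1 : ℕ) : ZMod n) + p.2) {p | (a : ZMod n) ∣ p.2} := by
  rintro ⟨i, _⟩ ⟨k, rfl⟩ ⟨j, _⟩ ⟨l, rfl⟩ heq
  -- reducing modulo `a` kills the multiples of `a`
  have hmod : ((i : ℕ) : ZMod a) = ((j : ℕ) : ZMod a) := by
    simpa only [map_add, map_mul, map_natCast, ZMod.natCast_self, zero_mul, add_zero] using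
      congrArg (ZMod.castHom hdvd (ZMod a)) heq
  have hij : i = j := by
    rw [ZMod.natCast_eq_natCast_iff', Nat.mod_eq_of_lt i.isLt, Nat.mod_eq_of_lt j.isLt] at hmod
    exact Fin.ext hmod
  subst hij
  exact Prod.ext rfl (add_left_cancel heq)

theorem difference_set_map_cycle_length_general
    (n a b : ℕ) (hn : n = a * b)
    (π : Equiv.Perm (Fin a)) (v : Fin a → ZMod n)
    (hv : ∀ i : Fin a, ∃ k : ZMod n, v i = (a : ZMod n) * k)
    (Y : ZMod n → ZMod n)
    (hY : ∀ (i : Fin a) (k : ZMod n),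
        Y (((i : ℕ) : ZMod n) + (a : ZMod n) * k) =
          ((π i : ℕ) : ZMod n) + (a : ZMod n) * k + v i)
    (i : Fin a) (u : ZMod n) (k : ZMod n) (hu : u = (a : ZMod n) * k)
    (c : ℕ) (hc1 : 0 < c) (hc2 : (π ^ c) i = i)
    (hc3 : ∀ m : ℕ, 0 < m → m < c → (π ^ m) i ≠ i)
    (α : ℕ) (hα1 : 0 < α)
    (hα2 : α • (∑ j ∈ Finset.range c, v ((π ^ j) i)) = 0)
    (hα3 : ∀ m : ℕ, 0 < m → m < α →
        m • (∑ j ∈ Finset.range c, v ((π ^ j) i)) ≠ 0) :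
    Y^[α * c] (((i : ℕ) : ZMod n) + u) = ((i : ℕ) : ZMod n) + u ∧
    ∀ m : ℕ, 0 < m → m < α * c →
      Y^[m] (((i : ℕ) : ZMod n) + u) ≠ ((i : ℕ) : ZMod n) + u := by
  let φ : Fin a × ZMod n → ZMod n := fun p => ((p.1 : ℕ) : ZMod n) + p.2
  let s : Set (Fin a × ZMod n) := {p | (a : ZMod n) ∣ p.2}
  have hmaps : MapsTo (skewProduct π v) s s := fun p hp => dvd_add hp (hv p.1)
  have hsemiconj : ∀ p ∈ s, φ (skewProduct π v p) = Y (φ p) := by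
    rintro ⟨j, _⟩ ⟨l, rfl⟩
    rw [hY, skewProduct, add_assoc]
  have hπ : minimalPeriod π i = c := by
    refine minimalPeriod_eq_of_isPeriodicPt_of_forall_lt hc1 ?_ fun m hm hmc => ?_ <;>
      rw [IsPeriodicPt, IsFixedPt, Equiv.Perm.iterate_eq_pow]
    exacts [hc2, hc3 m hm hmc]
  have hsum : birkhoffSum π v c i = ∑ j ∈ Finset.range c, v ((π ^ j) i) := by
    simp only [birkhoffSum, Equiv.Perm.iterate_eq_pow]
  have horder : addOrderOf (birkhoffSum π v c i) = α := by
    rw [hsum, addOrderOf_eq_iff hα1]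
    exact ⟨hα2, fun m hmα hm => hα3 m hm hmα⟩
  have hperiod : minimalPeriod Y (((i : ℕ) : ZMod n) + u) = α * c := calc
    _ = minimalPeriod (skewProduct π v) (i, u) :=
      minimalPeriod_eq_of_semiconj_on hmaps (ZMod.injOn_natCast_fin_add (Dvd.intro b hn.symm))
        hsemiconj ⟨k, hu⟩
    _ = α * c := by rw [minimalPeriod_skewProduct, hπ, horder, mul_comm]
  refine ⟨hperiod ▸ iterate_minimalPeriod, fun m hm hlt => ?_⟩
  exact not_isPeriodicPt_of_pos_of_lt_minimalPeriod hm.ne' (hperiod ▸ hlt)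

/-- Lemma 12: the cycle of the permutation `Y(i + u) = π(i) + u + vᵢ` containing
`i + u` has length `α·c`, where `c` is the length of the cycle of `π` containing
`i` and `α` is the least positive integer with
`α·(vᵢ + v_{π(i)} + ⋯ + v_{π^{c−1}(i)}) = 0` in `ℤ/nℤ`. -/
theorem difference_set_map_cycle_length
    (n a b : ℕ) (ha : 0 < a) (hb : 0 < b) (hn : n = a * b)
    (π : Equiv.Perm (Fin a)) (v : Fin a → ZMod n)
    (hv : ∀ i : Fin a, ∃ k : ZMod n, v i = (a : ZMod n) * k)
    (Y : ZMod n → ZMod n)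
    (hY : ∀ (i : Fin a) (k : ZMod n),
        Y (((i : ℕ) : ZMod n) + (a : ZMod n) * k) =
          ((π i : ℕ) : ZMod n) + (a : ZMod n) * k + v i)
    (i : Fin a) (u : ZMod n) (k : ZMod n) (hu : u = (a : ZMod n) * k)
    (c : ℕ) (hc1 : 0 < c) (hc2 : (π ^ c) i = i)
    (hc3 : ∀ m : ℕ, 0 < m → m < c → (π ^ m) i ≠ i)
    (α : ℕ) (hα1 : 0 < α)
    (hα2 : α • (∑ j ∈ Finset.range c, v ((π ^ j) i)) = 0)
    (hα3 : ∀ m : ℕ, 0 < m → m < α →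
        m • (∑ j ∈ Finset.range c, v ((π ^ j) i)) ≠ 0) :
    Y^[α * c] (((i : ℕ) : ZMod n) + u) = ((i : ℕ) : ZMod n) + u ∧
    ∀ m : ℕ, 0 < m → m < α * c →
      Y^[m] (((i : ℕ) : ZMod n) + u) ≠ ((i : ℕ) : ZMod n) + u :=
  difference_set_map_cycle_length_general n a b hn π v hv Y hY i u k hu c hc1 hc2 hc3 α hα1 hα2 hα3
end

section
/- Let n = a·b, U = aℤ/nℤ, π a permutation of {0,…,a−1}, and v₀,…,v_{a−1} ∈ U, with Y(π,(vᵢ))(i + u) = π(i) + u + vᵢ. Define the permutation π′ of {0,…,a−1} by π′(i) = π(i − 1) + 1 (indices and values mod a), and define w₀ = v_{a−1} − a, w_{π^{−1}(a−1)+1} = v_{π^{−1}(a−1)} + a, and wᵢ = v_{i−1} for all other i (where the two exceptional adjustments are cumulative if the indices coincide). Then the map σ(x) = x + 1 on ℤ/nℤ satisfies Y(π′,(wᵢ))(x + 1) = Y(π,(vᵢ))(x) + 1 for all x ∈ ℤ/nℤ; that is, σ is an isomorphism from the digraph with edge set {(x, x+1)} ∪ {(x, Y(π,(vᵢ))(x))}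 onto the digraph with edge set {(x, x+1)} ∪ {(x, Y(π′,(wᵢ))(x))}. -/
theorem Fin.natCast_val_add_one {R : Type*} [AddGroupWithOne R] {a : ℕ} [NeZero a] (j : Fin a) :
    ((j : ℕ) : R) + 1 = (((j + 1 : Fin a) : ℕ) : R) + if j + 1 = 0 then (a : R) else 0 := by
  have hval : ((j + 1 : Fin a) : ℕ) = ((j : ℕ) + 1) % a := by
    rw [Fin.val_add, Fin.val_one', Nat.add_mod_mod]
  have hle : (j : ℕ) + 1 ≤ a := j.isLt
  split_ifs with h
  · have hja : (j : ℕ) + 1 = a := le_antisymm hle <|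
      Nat.le_of_dvd (Nat.succ_pos _) (Nat.dvd_of_mod_eq_zero (by rw [← hval, h, Fin.val_zero]))
    rw [h, Fin.val_zero, Nat.cast_zero, zero_add, ← Nat.cast_add_one, hja]
  · have hlt : (j : ℕ) + 1 < a :=
      lt_of_le_of_ne hle fun he => h (Fin.ext (by rw [hval, he, Nat.mod_self, Fin.val_zero]))
    rw [hval, Nat.mod_eq_of_lt hlt, Nat.cast_add_one, add_zero]

theorem ZMod.exists_eq_natCast_fin_add_mul {n : ℕ} (a : ℕ) [NeZero a] (x : ZMod n) :
    ∃ (i : Fin a) (k : ZMod n), x = ((i : ℕ) : ZMod n) + (a : ZMod n) * k := by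
  obtain ⟨m, rfl⟩ := ZMod.intCast_surjective x
  have ha : (0 : ℤ) < a := by exact_mod_cast Nat.pos_of_neZero a
  have hrem : (((m % a).toNat : ℕ) : ℤ) = m % a := Int.toNat_of_nonneg (Int.emod_nonneg m ha.ne')
  refine ⟨⟨(m % a).toNat, by have := Int.emod_lt_of_pos m ha; omega⟩, ((m / a : ℤ) : ZMod n), ?_⟩
  have hdiv := congrArg (Int.cast : ℤ → ZMod n) (Int.emod_add_mul_ediv m a)
  rw [← Int.cast_natCast, hrem]
  push_cast at hdiv ⊢
  exact hdiv.symm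

theorem difference_set_shift_isomorphism_general
    (n a : ℕ) [NeZero a]
    (π π' : Equiv.Perm (Fin a)) (v w : Fin a → ZMod n)
    (hπ' : ∀ i : Fin a, π' i = π (i - 1) + 1)
    (hw : ∀ i : Fin a, w i =
        v (i - 1) + (if i = 0 then -(a : ZMod n) else 0) +
          (if i = π.symm (0 - 1) + 1 then (a : ZMod n) else 0))
    (Y Y' : ZMod n → ZMod n)
    (hY : ∀ (i : Fin a) (k : ZMod n),
        Y (((i : ℕ) : ZMod n) + (a : ZMod n) * k) =
          ((π i : ℕ) : ZMod n) + (a : ZMod n) * k + v i)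
    (hY' : ∀ (i : Fin a) (k : ZMod n),
        Y' (((i : ℕ) : ZMod n) + (a : ZMod n) * k) =
          ((π' i : ℕ) : ZMod n) + (a : ZMod n) * k + w i) :
    (∀ x : ZMod n, Y' (x + 1) = Y x + 1) ∧
    ∀ x y : ZMod n,
      (y = x + 1 ∨ y = Y x) ↔ (y + 1 = (x + 1) + 1 ∨ y + 1 = Y' (x + 1)) := by
  have hshift : ∀ x : ZMod n, Y' (x + 1) = Y x + 1 := by
    intro x
    obtain ⟨i, k, rfl⟩ := ZMod.exists_eq_natCast_fin_add_mul a x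
    have hi := Fin.natCast_val_add_one (R := ZMod n) i
    have hπi := Fin.natCast_val_add_one (R := ZMod n) (π i)
    have hcorner : i + 1 = π.symm (0 - 1) + 1 ↔ π i + 1 = 0 := by
      rw [add_left_inj, Equiv.eq_symm_apply, eq_sub_iff_add_eq]
    -- Adding 1 carries into the next block of `a` exactly when `i + 1 = 0` (on the source side)
    -- and when `π i + 1 = 0` (on the image side); the two corrections in `w` undo these carries.
    have hx : ((i : ℕ) : ZMod n) + a * k + 1 =
        (((i + 1 : Fin a) : ℕ) : ZMod n) + a * (k + if i + 1 = 0 then 1 else 0) := by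
      rw [add_right_comm, hi]; split_ifs <;> ring
    rw [hx, hY', hY, hπ', hw, add_sub_cancel_right]
    simp only [hcorner]
    split_ifs at hi hπi ⊢ <;> linear_combination -hπi
  refine ⟨hshift, fun x y => ?_⟩
  rw [hshift x, add_left_inj, add_left_inj]

/-- Lemma 14: with `π′(i) = π(i−1) + 1` (mod `a`) and
`w₀ = v_{a−1} − a`, `w_{π^{−1}(a−1)+1} = v_{π^{−1}(a−1)} + a`, `wᵢ = v_{i−1}`
otherwise (adjustments cumulative if the indices coincide), the translation
`σ(x) = x + 1` satisfies `Y(π′,(wᵢ))(x + 1) = Y(π,(vᵢ))(x) + 1`, hence is an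
isomorphism between the corresponding digraphs. -/
theorem difference_set_shift_isomorphism
    (n a b : ℕ) [NeZero a] (ha : 0 < a) (hb : 0 < b) (hn : n = a * b)
    (π π' : Equiv.Perm (Fin a)) (v w : Fin a → ZMod n)
    (hv : ∀ i : Fin a, ∃ k : ZMod n, v i = (a : ZMod n) * k)
    (hπ' : ∀ i : Fin a, π' i = π (i - 1) + 1)
    (hw : ∀ i : Fin a, w i =
        v (i - 1) + (if i = 0 then -(a : ZMod n) else 0) +
          (if i = π.symm (0 - 1) + 1 then (a : ZMod n) else 0))
    (Y Y' : ZMod n → ZMod n)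
    (hY : ∀ (i : Fin a) (k : ZMod n),
        Y (((i : ℕ) : ZMod n) + (a : ZMod n) * k) =
          ((π i : ℕ) : ZMod n) + (a : ZMod n) * k + v i)
    (hY' : ∀ (i : Fin a) (k : ZMod n),
        Y' (((i : ℕ) : ZMod n) + (a : ZMod n) * k) =
          ((π' i : ℕ) : ZMod n) + (a : ZMod n) * k + w i) :
    (∀ x : ZMod n, Y' (x + 1) = Y x + 1) ∧
    ∀ x y : ZMod n,
      (y = x + 1 ∨ y = Y x) ↔ (y + 1 = (x + 1) + 1 ∨ y + 1 = Y' (x + 1)) :=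
  difference_set_shift_isomorphism_general n a π π' v w hπ' hw Y Y' hY hY'
end
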